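/- Stability and invariance of counterfactuals for the Gumbel-Max SCM (conditional-measure form): let S be a finite nonempty type, let p and p' be strictly positive probability vectors on S, and let i ∈ S satisfy p' i / p i ≥ p' j / p j for every j ≠ i. Let E_i = { g : S → ℝ | i is the strict argmax of (log ∘ p) + g }, which has μ_G^S(E_i) = p i > 0. Then the conditional measure of μ_G^S given E_i assigns probability 1 to the event { g | i is the strict argmax of (log ∘ p') + g }; i.e., conditioned on having observed outcome i under p, the counterfactual outcome under p' is almost surely again i. -/

import Mathlib

/-!
Gumbel-max trick: for a standard Gumbel CDF `F(t) = exp (-exp (-t))` one has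
`F (t + a) = F t ^ exp (-a)`, so given `g i = t` the event that `i` beats every `k` in
`log p + g` has probability `F t ^ r` with `r = ∑_{k ≠ i} p k / p i = (1 - p i) / p i`, and
`∫ F ^ r dF = 1 / (r + 1) = p i`. The ratio condition says that passing from `log p` to `log p'`
widens the lead of `i` over every `k`, so the event for `p` is contained in the event for `p'`,
and a conditional measure gives full mass to every superset of the conditioning event.
-/

open MeasureTheory Real ProbabilityTheory

noncomputable def uniform01 : Measure ℝ := volume.restrict (Set.Ioo (0 : ℝ) 1)

/-- The standard Gumbel distribution on ℝ: the pushforward of the uniform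
measure on (0,1) under `u ↦ -log(-log u)`; its CDF is `x ↦ exp (-exp (-x))`. -/
noncomputable def stdGumbel : Measure ℝ :=
  uniform01.map (fun u : ℝ => -Real.log (-Real.log u))

noncomputable def gumbelPi (S : Type*) [Fintype S] : Measure (S → ℝ) :=
  Measure.pi (fun _ : S => stdGumbel)

open Set

lemma measurable_neg_log_neg_log : Measurable fun u : ℝ => -log (-log u) := by
  fun_prop

instance : IsProbabilityMeasure uniform01 :=
  ⟨by simp [uniform01]⟩

instance : IsProbabilityMeasure stdGumbel :=
  Measure.isProbabilityMeasure_map measurable_neg_log_neg_log.aemeasurable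

lemma neg_log_neg_log_lt_iff {u : ℝ} (hu : u ∈ Ioo 0 1) (a : ℝ) :
    -log (-log u) < a ↔ u < exp (-exp (-a)) := by
  have hlog : 0 < -log u := neg_pos.2 (log_neg hu.1 hu.2)
  rw [neg_lt, lt_log_iff_exp_lt hlog, lt_neg, log_lt_iff_lt_exp hu.1]

lemma stdGumbel_Iio (a : ℝ) : stdGumbel (Iio a) = ENNReal.ofReal (exp (-exp (-a))) := by
  have hb : exp (-exp (-a)) < 1 := exp_lt_one_iff.2 (neg_neg_of_pos (exp_pos _))
  have hset : (fun u => -log (-log u)) ⁻¹' Iio a ∩ Ioo 0 1 = Ioo 0 (exp (-exp (-a))) := by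
    ext u
    simp only [Set.mem_inter_iff, Set.mem_preimage, Set.mem_Iio, Set.mem_Ioo]
    constructor
    · rintro ⟨h, hu⟩
      exact ⟨hu.1, (neg_log_neg_log_lt_iff hu a).1 h⟩
    · rintro ⟨h0, h⟩
      have hu : u ∈ Ioo 0 1 := ⟨h0, h.trans hb⟩
      exact ⟨(neg_log_neg_log_lt_iff hu a).2 h, hu⟩
  rw [stdGumbel, Measure.map_apply measurable_neg_log_neg_log measurableSet_Iio, uniform01,
    Measure.restrict_apply (measurable_neg_log_neg_log measurableSet_Iio), hset, volume_Ioo,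
    sub_zero]

lemma lintegral_exp_neg_exp_mul_stdGumbel {r : ℝ} (hr : -1 < r) :
    ∫⁻ t, ENNReal.ofReal (exp (-exp (-t) * r)) ∂stdGumbel = ENNReal.ofReal (1 / (r + 1)) := by
  have hcomp : ∀ u ∈ Ioo (0 : ℝ) 1,
      ENNReal.ofReal (exp (-exp (-(-log (-log u))) * r)) = ENNReal.ofReal (u ^ r) := by
    intro u hu
    rw [neg_neg, exp_log (neg_pos.2 (log_neg hu.1 hu.2)), neg_neg, rpow_def_of_pos hu.1]
  have hint : IntegrableOn (fun u : ℝ => u ^ r) (Ioo 0 1) := by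
    rw [← integrableOn_Ioc_iff_integrableOn_Ioo]
    exact (intervalIntegral.intervalIntegrable_rpow' hr).1
  rw [stdGumbel, lintegral_map (by fun_prop) measurable_neg_log_neg_log, uniform01,
    setLIntegral_congr_fun measurableSet_Ioo hcomp,
    ← ofReal_integral_eq_lintegral_ofReal hint
      ((ae_restrict_mem measurableSet_Ioo).mono fun u hu => rpow_nonneg hu.1.le r),
    ← integral_Ioc_eq_integral_Ioo, ← intervalIntegral.integral_of_le zero_le_one,
    integral_rpow (Or.inl hr), one_rpow, zero_rpow (by linarith), sub_zero]

theorem MeasureTheory.Measure.pi_setOf_forall_ne_lt_add {ι : Type*} [Fintype ι] [DecidableEq ι]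
    (μ : ι → Measure ℝ) [∀ k, IsProbabilityMeasure (μ k)] (i : ι) (a : ι → ℝ) :
    Measure.pi μ {x | ∀ k, k ≠ i → x k < a k + x i}
      = ∫⁻ t, ∏ k ∈ Finset.univ.erase i, μ k (Iio (a k + t)) ∂μ i := by
  set A := {x : ι → ℝ | ∀ k, k ≠ i → x k < a k + x i}
  have hA : MeasurableSet A := by
    simp only [A, ofPred_forall]
    exact .iInter fun k => .iInter fun _ => measurableSet_lt (by fun_prop) (by fun_prop)
  set e := MeasurableEquiv.piEquivPiSubtypeProd (fun _ : ι => ℝ) (· = i)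
  have hslice (y : {j // j = i} → ℝ) : Prod.mk y ⁻¹' (e.symm ⁻¹' A)
      = univ.pi fun k : {j // ¬j = i} => Iio (a k + y ⟨i, rfl⟩) := by
    ext z
    simp only [Set.mem_preimage, mem_univ_pi, Set.mem_Iio]
    constructor
    · intro h k
      simpa [e, k.2] using h k k.2
    · intro h k hk
      simpa [e, hk] using h ⟨k, hk⟩
  rw [← (measurePreserving_piEquivPiSubtypeProd μ (· = i)).symm.measure_preimage
      hA.nullMeasurableSet, Measure.prod_apply (e.symm.measurable hA)]
  simp_rw [hslice, Measure.pi_pi]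
  -- `convert` also identifies the two `Fintype` instances on `{j // j = i}`.
  convert (measurePreserving_piUnique fun j : {j // j = i} => μ j).lintegral_comp_emb
    (MeasurableEquiv.piUnique _).measurableEmbedding
    (fun t => ∏ k ∈ Finset.univ.erase i, μ k (Iio (a k + t))) using 3 with y
  · exact (Finset.prod_subtype (Finset.univ.erase i) (p := (¬· = i)) (fun k => by simp)
      fun k => μ k (Iio (a k + y ⟨i, rfl⟩))).symm
  · rfl

def strictArgmaxSet {S : Type*} (c : S → ℝ) (i : S) : Set (S → ℝ) :=
  {g | ∀ k, k ≠ i → c k + g k < c i + g i}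

lemma measurableSet_strictArgmaxSet {S : Type*} [Fintype S] (c : S → ℝ) (i : S) :
    MeasurableSet (strictArgmaxSet c i) := by
  simp only [strictArgmaxSet, ofPred_forall]
  exact .iInter fun k => .iInter fun _ => measurableSet_lt (by fun_prop) (by fun_prop)

lemma strictArgmaxSet_subset {S : Type*} {c c' : S → ℝ} {i : S}
    (h : ∀ k, k ≠ i → c' k - c k ≤ c' i - c i) :
    strictArgmaxSet c i ⊆ strictArgmaxSet c' i :=
  fun g hg k hk => by linarith [hg k hk, h k hk]

theorem gumbelPi_strictArgmaxSet {S : Type*} [Fintype S] (c : S → ℝ) (i : S) :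
    gumbelPi S (strictArgmaxSet c i) = ENNReal.ofReal (exp (c i) / ∑ k, exp (c k)) := by
  classical
  have hset : strictArgmaxSet c i = {g | ∀ k, k ≠ i → g k < (c i - c k) + g i} := by
    ext g
    exact forall₂_congr fun k _ => by constructor <;> intro h <;> linarith
  set r := ∑ k ∈ Finset.univ.erase i, exp (c k - c i)
  have hr0 : 0 ≤ r := Finset.sum_nonneg fun k _ => (exp_pos _).le
  have hfactor (t : ℝ) (k : S) : stdGumbel (Iio (c i - c k + t))
      = ENNReal.ofReal (exp (-exp (-t) * exp (c k - c i))) := by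
    rw [stdGumbel_Iio, neg_mul, ← exp_add]
    ring_nf
  have hprod (t : ℝ) : ∏ k ∈ Finset.univ.erase i, stdGumbel (Iio (c i - c k + t))
      = ENNReal.ofReal (exp (-exp (-t) * r)) := by
    rw [Finset.prod_congr rfl fun k _ => hfactor t k,
      ← ENNReal.ofReal_prod_of_nonneg fun k _ => (exp_pos _).le, ← exp_sum, Finset.mul_sum]
  have hr : r + 1 = (∑ k, exp (c k)) / exp (c i) := by
    have hsplit : r + exp (c i - c i) = ∑ k, exp (c k - c i) :=
      Finset.sum_erase_add _ _ (Finset.mem_univ i)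
    rw [sub_self, exp_zero] at hsplit
    simp_rw [hsplit, Finset.sum_div, exp_sub]
  rw [hset, gumbelPi, Measure.pi_setOf_forall_ne_lt_add]
  simp_rw [hprod]
  rw [lintegral_exp_neg_exp_mul_stdGumbel (by linarith), hr, one_div_div]

theorem gumbelPi_strictArgmaxSet_log {S : Type*} [Fintype S] {p : S → ℝ} (hp : ∀ s, 0 < p s)
    (hpsum : ∑ s, p s = 1) (i : S) :
    gumbelPi S (strictArgmaxSet (fun k => log (p k)) i) = ENNReal.ofReal (p i) := by
  simp only [gumbelPi_strictArgmaxSet, exp_log (hp _), hpsum, div_one]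

lemma ProbabilityTheory.cond_eq_one_of_subset {Ω : Type*} [MeasurableSpace Ω] {μ : Measure Ω}
    {s t : Set Ω} (hs : MeasurableSet s) (hst : s ⊆ t) (h0 : μ s ≠ 0) (htop : μ s ≠ ⊤) :
    μ[t | s] = 1 := by
  rw [← cond_inter_self hs, inter_eq_left.2 hst, cond_apply_self h0 htop]

theorem gumbelMax_cf_invariance_cond_general {S : Type*} [Fintype S]
    (p p' : S → ℝ) (hp : ∀ s, 0 < p s) (hpsum : ∑ s, p s = 1)
    (hp' : ∀ s, 0 < p' s)
    (i : S) (hratio : ∀ j : S, j ≠ i → p' i / p i ≥ p' j / p j) :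
    gumbelPi S {g : S → ℝ | ∀ k : S, k ≠ i →
        Real.log (p k) + g k < Real.log (p i) + g i} = ENNReal.ofReal (p i)
    ∧ 0 < ENNReal.ofReal (p i)
    ∧ (gumbelPi S)[|{g : S → ℝ | ∀ k : S, k ≠ i →
          Real.log (p k) + g k < Real.log (p i) + g i}]
        {g : S → ℝ | ∀ k : S, k ≠ i →
          Real.log (p' k) + g k < Real.log (p' i) + g i}
        = 1 := by
  have hE : gumbelPi S (strictArgmaxSet (fun k => log (p k)) i) = ENNReal.ofReal (p i) :=
    gumbelPi_strictArgmaxSet_log hp hpsum i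
  have hpos : 0 < ENNReal.ofReal (p i) := ENNReal.ofReal_pos.2 (hp i)
  have hlead (k : S) (hk : k ≠ i) : log (p' k) - log (p k) ≤ log (p' i) - log (p i) := by
    rw [← log_div (hp' k).ne' (hp k).ne', ← log_div (hp' i).ne' (hp i).ne']
    exact log_le_log (div_pos (hp' k) (hp k)) (hratio k hk)
  exact ⟨hE, hpos, cond_eq_one_of_subset (measurableSet_strictArgmaxSet _ i)
    (strictArgmaxSet_subset hlead) (hE ▸ hpos.ne') (hE ▸ ENNReal.ofReal_ne_top)⟩

/-- Stability and invariance of counterfactuals for the Gumbel-Max SCM,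
conditional-measure form: the event `E_i` that `i` is the strict argmax of
`log ∘ p + g` has probability `p i > 0`, and if `p' i / p i ≥ p' j / p j` for
all `j ≠ i`, then conditionally on `E_i` the counterfactual outcome under `p'`
(with the same noise) is almost surely again `i`. -/
theorem gumbelMax_cf_invariance_cond {S : Type*} [Fintype S] [Nonempty S]
    (p p' : S → ℝ) (hp : ∀ s, 0 < p s) (hpsum : ∑ s, p s = 1)
    (hp' : ∀ s, 0 < p' s) (hp'sum : ∑ s, p' s = 1)
    (i : S) (hratio : ∀ j : S, j ≠ i → p' i / p i ≥ p' j / p j) :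
    gumbelPi S {g : S → ℝ | ∀ k : S, k ≠ i →
        Real.log (p k) + g k < Real.log (p i) + g i} = ENNReal.ofReal (p i)
    ∧ 0 < ENNReal.ofReal (p i)
    ∧ (gumbelPi S)[|{g : S → ℝ | ∀ k : S, k ≠ i →
          Real.log (p k) + g k < Real.log (p i) + g i}]
        {g : S → ℝ | ∀ k : S, k ≠ i →
          Real.log (p' k) + g k < Real.log (p' i) + g i}
        = 1 :=
  gumbelMax_cf_invariance_cond_general p p' hp hpsum hp' i hratio
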